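/- arXiv:math/0507062 — 2 statements merged into one kernel-verified Lean document; each statement's English description precedes it below -/
import Mathlib

section
/- Let X = lim S with projections r_α : X → X_α, where S = (X_α, r^β_α, κ) is a continuous inverse sequence of compact Hausdorff spaces with a right inverse (i^β_α). Let (S_α)_{α<κ} be a family of sets with S_α ⊆ S_β for α ≤ β, let S = ∪_{α<κ} S_α, and suppose h_α : X_α → [0,1]^{S_α} are Valdivia embeddings such that for all α ≤ β < κ: π^{S_β}_{S_α} ∘ h_β = h_α ∘ r^β_α (where π^{S_β}_{S_α} : [0,1]^{S_β} → [0,1]^{S_α} is the restriction map) and h_β ∘ i^β_α = j^{S_β}_{S_α} ∘ h_α (where j^{S_β}_{S_α} : [0,1]^{S_α} → [0,1]^{S_β} extends a function by 0 on S_β \ S_α). Then the unique continuous map h : X → [0,1]^S satisfying π^S_{S_α} ∘ h = h_α ∘ r_α for all α < κ is a Valdivia embedding. -/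
open Set Filter Topology

universe u v w

/-- A continuous inverse sequence over a well-ordered index set `ι` (representing an
ordinal): continuous surjective bonding maps with identity and composition laws,
such that at every limit point `δ` of `ι` the map `X δ → Π_{α<δ} X α` is injective. -/
structure IsContInvSeq {ι : Type*} [LinearOrder ι] {X : ι → Type*}
    [∀ α, TopologicalSpace (X α)]
    (r : ∀ ⦃α β : ι⦄, α ≤ β → X β → X α) : Prop where
  continuous : ∀ ⦃α β : ι⦄ (h : α ≤ β), Continuous (r h)
  surjective : ∀ ⦃α β : ι⦄ (h : α ≤ β), Function.Surjective (r h)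
  map_id : ∀ (α : ι) (x : X α), r (le_refl α) x = x
  map_comp : ∀ ⦃α β γ : ι⦄ (h₁ : α ≤ β) (h₂ : β ≤ γ) (x : X γ),
    r h₁ (r h₂ x) = r (h₁.trans h₂) x
  limit_inj : ∀ δ : ι, (∃ α, α < δ) → (∀ α, α < δ → ∃ β, α < β ∧ β < δ) →
    ∀ x y : X δ, (∀ (α : ι) (h : α < δ), r h.le x = r h.le y) → x = y

/-- The limit of an inverse sequence: the space of threads, a subspace of the
product `Π α, X α`. -/
abbrev InvLim {ι : Type*} [LinearOrder ι] {X : ι → Type*}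
    [∀ α, TopologicalSpace (X α)]
    (r : ∀ ⦃α β : ι⦄, α ≤ β → X β → X α) : Type _ :=
  {x : ∀ α, X α // ∀ ⦃α β : ι⦄ (h : α ≤ β), r h (x β) = x α}

/-- A continuous surjection which admits a continuous right inverse. -/
def IsRetraction {X Y : Type*} [TopologicalSpace X] [TopologicalSpace Y]
    (f : X → Y) : Prop :=
  Continuous f ∧ Function.Surjective f ∧ ∃ g : Y → X, Continuous g ∧ f ∘ g = id

/-- `Σ(T)`: the points of the Tikhonov cube `[0,1]^T` with countable support. -/
def SigmaProd (T : Type*) : Set (T → unitInterval) :=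
  {x | {t | x t ≠ 0}.Countable}

/-- A Valdivia embedding into the cube `[0,1]^T`. -/
def IsValdiviaEmbedding {X : Type*} [TopologicalSpace X] {T : Type*}
    (h : X → T → unitInterval) : Prop :=
  Topology.IsEmbedding h ∧ Set.range h = closure (Set.range h ∩ SigmaProd T)

/-- let `X` be the limit of a continuous inverse sequence of compact
Hausdorff spaces with a right inverse `(i^β_α)`, let `(S_α)` be an increasing family
of subsets of a set `S` with `S = ⋃ S_α`, and let `h_α : X_α → [0,1]^{S_α}` be
Valdivia embeddings (realized as maps into `[0,1]^S` supported on `S_α`) which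
commute with the bonding maps (`π^{S_β}_{S_α} ∘ h_β = h_α ∘ r^β_α`) and with the
right inverses (`h_β ∘ i^β_α = j^{S_β}_{S_α} ∘ h_α`).  Then the limit map
`H : X → [0,1]^S` (the unique continuous map with `π^S_{S_α} ∘ H = h_α ∘ r_α`)
is a Valdivia embedding. -/
theorem statement9 {ι : Type v} [LinearOrder ι] [WellFoundedLT ι]
    {X : ι → Type u} [∀ α, TopologicalSpace (X α)] [∀ α, CompactSpace (X α)]
    [∀ α, T2Space (X α)]
    (r : ∀ ⦃α β : ι⦄, α ≤ β → X β → X α) (hseq : IsContInvSeq r)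
    (i : ∀ ⦃α β : ι⦄, α ≤ β → X α → X β)
    (hicont : ∀ ⦃α β : ι⦄ (h : α ≤ β), Continuous (i h))
    (hiid : ∀ (α : ι) (x : X α), i (le_refl α) x = x)
    (hir : ∀ ⦃α β : ι⦄ (h : α ≤ β) (x : X α), r h (i h x) = x)
    (hicomp : ∀ ⦃α β γ : ι⦄ (h₁ : α ≤ β) (h₂ : β ≤ γ) (x : X α),
      i h₂ (i h₁ x) = i (h₁.trans h₂) x)
    {S : Type w} (Sα : ι → Set S) (hmono : Monotone Sα)
    (hcover : (⋃ α : ι, Sα α) = Set.univ)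
    (h : ∀ α : ι, X α → S → unitInterval)
    -- each `h α` takes values in the canonical copy of `[0,1]^{S_α}` in `[0,1]^S`:
    (hsupp : ∀ (α : ι) (x : X α) (s : S), s ∉ Sα α → h α x s = 0)
    -- each `h α` is a Valdivia embedding of `X α` into `[0,1]^{S_α}`:
    (hval : ∀ α : ι, IsValdiviaEmbedding (h α))
    -- first commuting diagram: `π^{S_β}_{S_α} ∘ h_β = h_α ∘ r^β_α`:
    (hdiag₁ : ∀ ⦃α β : ι⦄ (hab : α ≤ β) (x : X β) (s : S),
      s ∈ Sα α → h α (r hab x) s = h β x s)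
    -- second commuting diagram: `h_β ∘ i^β_α = j^{S_β}_{S_α} ∘ h_α`:
    (hdiag₂ : ∀ ⦃α β : ι⦄ (hab : α ≤ β) (x : X α), h β (i hab x) = h α x)
    -- `H` is the limit map, i.e. the continuous map with `π^S_{S_α} ∘ H = h_α ∘ r_α`:
    (H : InvLim r → S → unitInterval) (hHcont : Continuous H)
    (hH : ∀ (x : InvLim r) (α : ι) (s : S), s ∈ Sα α → H x s = h α (x.1 α) s) :
    IsValdiviaEmbedding H := by
  classical
  -- `InvLim r` is compact: it is a closed subset of the product.
  have hclosed : IsClosed {x : ∀ α, X α | ∀ ⦃α β : ι⦄ (h : α ≤ β), r h (x β) = x α} := by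
    have heq : {x : ∀ α, X α | ∀ ⦃α β : ι⦄ (h : α ≤ β), r h (x β) = x α}
        = ⋂ (α : ι) (β : ι) (h : α ≤ β), {x : ∀ α, X α | r h (x β) = x α} := by
      ext x
      simp only [Set.mem_iInter, Set.mem_setOf_eq]
    rw [heq]
    exact isClosed_iInter fun α => isClosed_iInter fun β => isClosed_iInter fun hh =>
      isClosed_eq ((hseq.continuous hh).comp (continuous_apply β)) (continuous_apply α)
  haveI : CompactSpace (InvLim r) := isCompact_iff_compactSpace.mp hclosed.isCompact
  -- `H` is injective.
  have hinj : Function.Injective H := by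
    intro x y hxy
    apply Subtype.ext
    funext α
    apply (hval α).1.injective
    funext s
    by_cases hs : s ∈ Sα α
    · rw [← hH x α s hs, ← hH y α s hs, hxy]
    · rw [hsupp α _ s hs, hsupp α _ s hs]
  have hce : Topology.IsClosedEmbedding H := hHcont.isClosedEmbedding hinj
  -- every point of `range (h α)` lies in `range H`, via the section built from `i`.
  have key : ∀ (α : ι) (y : X α), h α y ∈ Set.range H := by
    intro α y
    refine ⟨⟨fun β => if hh : α ≤ β then i hh y else r (le_of_not_ge hh) y, ?_⟩, ?_⟩
    · intro β γ hbg
      dsimp only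
      by_cases hab : α ≤ β
      · rw [dif_pos hab, dif_pos (hab.trans hbg), ← hicomp hab hbg, hir]
      · rw [dif_neg hab]
        by_cases hag : α ≤ γ
        · rw [dif_pos hag]
          exact (hseq.map_comp (le_of_not_ge hab) hag (i hag y)).symm.trans
            (congrArg (r (le_of_not_ge hab)) (hir hag y))
        · rw [dif_neg hag]
          exact hseq.map_comp hbg (le_of_not_ge hag) y
    · funext s
      have hsmem : s ∈ ⋃ γ, Sα γ := by rw [hcover]; trivial
      obtain ⟨γ, hγ⟩ := Set.mem_iUnion.mp hsmem
      have hsβ : s ∈ Sα (max α γ) := hmono (le_max_right α γ) hγ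
      rw [hH _ (max α γ) s hsβ]
      dsimp only
      rw [dif_pos (le_max_left α γ)]
      exact congrFun (hdiag₂ (le_max_left α γ) y) s
  -- `range (h α) ⊆ closure (range H ∩ Σ)`.
  have hCsub : ∀ α : ι, Set.range (h α) ⊆ closure (Set.range H ∩ SigmaProd S) := by
    intro α z hz
    rw [(hval α).2] at hz
    refine closure_mono ?_ hz
    rintro w ⟨⟨y, rfl⟩, hw⟩
    exact ⟨key α y, hw⟩
  -- forward inclusion.
  have fwd : Set.range H ⊆ closure (Set.range H ∩ SigmaProd S) := by
    rintro _ ⟨x, rfl⟩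
    rcases isEmpty_or_nonempty ι with hι | hι
    · -- then `S` is empty and `Σ(S)` is everything.
      have hS : IsEmpty S := by
        by_contra hne
        rw [not_isEmpty_iff] at hne
        obtain ⟨s⟩ := hne
        have hsmem : s ∈ ⋃ γ, Sα γ := by rw [hcover]; trivial
        obtain ⟨α, -⟩ := Set.mem_iUnion.mp hsmem
        exact hι.false α
      haveI := hS
      exact subset_closure ⟨Set.mem_range_self x, Set.to_countable _⟩
    · -- `H x` is the limit of the net `α ↦ h α (x.1 α)`.
      have h1 : Tendsto (fun α : ι => h α (x.1 α)) atTop (𝓝 (H x)) := by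
        rw [tendsto_pi_nhds]
        intro s
        have hsmem : s ∈ ⋃ γ, Sα γ := by rw [hcover]; trivial
        obtain ⟨γ, hγ⟩ := Set.mem_iUnion.mp hsmem
        have hEE : (fun _ : ι => H x s) =ᶠ[atTop] fun α => h α (x.1 α) s := by
          filter_upwards [eventually_ge_atTop γ] with α hα
          exact hH x α s (hmono hα hγ)
        exact Tendsto.congr' hEE tendsto_const_nhds
      have h2 : ∀ᶠ α in (atTop : Filter ι),
          h α (x.1 α) ∈ closure (Set.range H ∩ SigmaProd S) :=
        Filter.Eventually.of_forall fun α => hCsub α ⟨_, rfl⟩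
      have := mem_closure_of_tendsto h1 h2
      rwa [closure_closure] at this
  have bwd : closure (Set.range H ∩ SigmaProd S) ⊆ Set.range H :=
    hce.isClosed_range.closure_subset_iff.mpr Set.inter_subset_left
  exact ⟨hce.toIsEmbedding, Set.Subset.antisymm fwd bwd⟩
end

section
/- Let X = lim S, where S = (X_α, r^β_α, κ) is a continuous inverse sequence of compact Hausdorff spaces indexed by an ordinal κ such that X_0 is Valdivia compact and each successor bonding map r^{α+1}_α : X_{α+1} → X_α is a simple retraction. Then X is Valdivia compact. -/
open Set Filter Topology

universe u v

/-- A simple retraction: a retraction `f` such that the image of every nonempty open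
set contains a nonempty Gδ set, and `f` has a metrizable kernel, i.e. there is a
continuous `g : X → [0,1]^ℕ` with `x ↦ (f x, g x)` injective. -/
def IsSimpleRetraction {X Y : Type*} [TopologicalSpace X] [TopologicalSpace Y]
    (f : X → Y) : Prop :=
  IsRetraction f ∧
  (∀ u : Set X, IsOpen u → u.Nonempty → ∃ G : Set Y, G.Nonempty ∧ IsGδ G ∧ G ⊆ f '' u) ∧
  ∃ g : X → ℕ → unitInterval, Continuous g ∧ Function.Injective (fun x => (f x, g x))

/-- A space is Valdivia compact if it admits a Valdivia embedding into some cube. -/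
def IsValdivia (X : Type u) [TopologicalSpace X] : Prop :=
  ∃ (T : Type u) (h : X → T → unitInterval), IsValdiviaEmbedding h

/-!
Fix a Valdivia embedding `h₀` of `X ⊥`, and for every successor step `α ⋖ δ` a continuous
section `s` of `r : X δ → X α` and a map `g : X δ → [0,1]^ℕ` separating the fibres of `r`.
A thread `x` is sent to `h₀ (x ⊥)` together with, for every step `α ⋖ δ`, the positive and
negative parts of `g (x δ) - g (s (x α))`. This map is a continuous injection of the compact
limit, and it sends into `Σ` every thread with `x ⊥ ∈ h₀⁻¹ Σ` that follows the sections at all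
but countably many steps. It remains to see that these threads are dense. Their analogues in
each `X γ` are dense by transfinite induction: at successor steps because the image of an open
set contains a nonempty Gδ set, which a dense countably closed set must meet; at limit steps,
and for the limit itself, because any point can be extended upwards along the sections.
-/

def IsCountablyClosed {K : Type*} [TopologicalSpace K] (D : Set K) : Prop :=
  ∀ C ⊆ D, C.Countable → closure C ⊆ D

theorem IsCountablyClosed.preimage {K L : Type*} [TopologicalSpace K] [TopologicalSpace L]
    {D : Set L} (hD : IsCountablyClosed D) {f : K → L} (hf : Continuous f) :
    IsCountablyClosed (f ⁻¹' D) := fun _ hC hCc =>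
  (closure_subset_preimage_closure_image hf).trans
    (preimage_mono (hD _ (image_subset_iff.2 hC) (hCc.image f)))

/-- The accumulation point of a sequence in `D` approaching `G` through shrinking closed
neighbourhoods lies in `D` because `D` is countably closed. -/
theorem Dense.inter_nonempty_of_isGδ {K : Type*} [TopologicalSpace K] [CompactSpace K]
    [RegularSpace K] {D G : Set K} (hD : Dense D) (hDc : IsCountablyClosed D) (hG : IsGδ G)
    (hGne : G.Nonempty) : (D ∩ G).Nonempty := by
  obtain ⟨p, hp⟩ := hGne
  obtain ⟨U, hUo, rfl⟩ := hG.eq_iInter_nat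
  choose F hFp hFc hFU using fun n =>
    exists_mem_nhds_isClosed_subset ((hUo n).mem_nhds (mem_iInter.1 hp n))
  set F' : ℕ → Set K := fun n => ⋂ k ≤ n, F k
  have hF'p : ∀ n, F' n ∈ 𝓝 p := fun n => (biInter_mem (finite_le_nat n)).2 fun k _ => hFp k
  have hF'anti : Antitone F' := fun m n hmn x hx =>
    mem_iInter₂.2 fun k hk => mem_iInter₂.1 hx k (hk.trans hmn)
  choose d hdD hdF using fun n => hD.inter_nhds_nonempty (hF'p n)
  obtain ⟨z, hz⟩ := exists_clusterPt_of_compactSpace (map d atTop)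
  have hz' : ∀ m, z ∈ closure (d '' Ici m) := mapClusterPt_atTop_iff_forall_mem_closure.1 hz
  refine ⟨z, hDc _ (range_subset_iff.2 hdD) (countable_range d)
    (closure_mono (image_subset_range _ _) (hz' 0)), mem_iInter.2 fun m => hFU m ?_⟩
  have hmF' : closure (d '' Ici m) ⊆ F' m :=
    closure_minimal (image_subset_iff.2 fun n hn => hF'anti hn (hdF n))
      (isClosed_biInter fun k _ => hFc k)
  exact mem_iInter₂.1 (hmF' (hz' m)) m le_rfl

theorem dense_of_forall_dense_image {Y ι : Type*} [TopologicalSpace Y] [Preorder ι]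
    [IsDirectedOrder ι] [Nonempty ι] {X : ι → Type*} [∀ i, TopologicalSpace (X i)]
    {r : ∀ ⦃i j : ι⦄, i ≤ j → X j → X i} (hr : ∀ ⦃i j⦄ (h : i ≤ j), Continuous (r h))
    {p : ∀ i, Y → X i} (hrp : ∀ ⦃i j⦄ (h : i ≤ j) y, r h (p j y) = p i y)
    (hp : IsInducing fun y i => p i y) {D : Set Y} (hD : ∀ i, Dense (p i '' D)) :
    Dense D := by
  rw [dense_iff_inter_open]
  rintro v hv ⟨y, hy⟩
  obtain ⟨W, hWo, rfl⟩ := hp.isOpen_iff.1 hv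
  obtain ⟨F, u, hu, hFW⟩ := isOpen_pi_iff.1 hWo _ hy
  obtain ⟨k, hk⟩ := F.exists_le
  have hv' : IsOpen (⋂ i : F, r (hk i i.2) ⁻¹' u i) :=
    isOpen_iInter_of_finite fun i => (hu i i.2).1.preimage (hr _)
  obtain ⟨_, hw, d, hdD, rfl⟩ := (hD k).inter_open_nonempty _ hv'
    ⟨p k y, mem_iInter.2 fun i => by simpa only [mem_preimage, hrp] using (hu i i.2).2⟩
  refine ⟨d, hFW fun i hi => ?_, hdD⟩
  simpa only [mem_preimage, hrp] using mem_iInter.1 hw ⟨i, hi⟩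

theorem isCountablyClosed_sigmaProd (T : Type*) : IsCountablyClosed (SigmaProd T) := by
  intro C hCσ hC
  set S := ⋃ c ∈ C, {t | c t ≠ 0}
  have hS : S.Countable := hC.biUnion fun c hc => hCσ hc
  have hclosed : IsClosed {x : T → unitInterval | ∀ t ∉ S, x t = 0} := by
    simp only [ofPred_forall]
    exact isClosed_iInter fun t => isClosed_iInter fun _ =>
      isClosed_eq (continuous_apply t) continuous_const
  have hsub : closure C ⊆ {x | ∀ t ∉ S, x t = 0} :=
    closure_minimal (fun c hc t ht => by_contra fun h => ht (mem_biUnion hc h)) hclosed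
  exact fun x hx => hS.mono fun t ht => by_contra fun h => ht (hsub hx t h)

theorem IsValdiviaEmbedding.dense_preimage_sigmaProd {K T : Type*} [TopologicalSpace K]
    {h : K → T → unitInterval} (hh : IsValdiviaEmbedding h) : Dense (h ⁻¹' SigmaProd T) := by
  intro x
  rw [hh.1.isInducing.closure_eq_preimage_closure_image, mem_preimage,
    image_preimage_eq_inter_range, inter_comm, ← hh.2]
  exact mem_range_self x

theorem isValdiviaEmbedding_of_dense {K T : Type*} [TopologicalSpace K] [CompactSpace K]
    {h : K → T → unitInterval} (hc : Continuous h) (hi : Function.Injective h) {D : Set K}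
    (hD : Dense D) (hDσ : MapsTo h D (SigmaProd T)) : IsValdiviaEmbedding h := by
  have hce := hc.isClosedEmbedding hi
  refine ⟨hce.isEmbedding,
    Subset.antisymm ?_ (closure_minimal inter_subset_left hce.isClosed_range)⟩
  rintro _ ⟨x, rfl⟩
  exact closure_mono (subset_inter (image_subset_range h D) hDσ.image_subset)
    (image_closure_subset_closure_image hc (mem_image_of_mem h (hD x)))

noncomputable def posDiff (a b : unitInterval) : unitInterval :=
  projIcc 0 1 zero_le_one (a - b)

theorem posDiff_self (a : unitInterval) : posDiff a a = 0 := by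
  simp [posDiff]

theorem Continuous.posDiff {Z : Type*} [TopologicalSpace Z] {f g : Z → unitInterval}
    (hf : Continuous f) (hg : Continuous g) : Continuous fun z => posDiff (f z) (g z) :=
  continuous_projIcc.comp ((continuous_subtype_val.comp hf).sub (continuous_subtype_val.comp hg))

theorem eq_of_posDiff_eq {a a' c : unitInterval} (h₁ : posDiff a c = posDiff a' c)
    (h₂ : posDiff c a = posDiff c a') : a = a' := by
  have hsub : ∀ b : unitInterval, (b : ℝ) - c = posDiff b c - posDiff c b := by
    intro b
    have hb := b.2; have hc := c.2
    simp only [posDiff, coe_projIcc, mem_Icc] at hb hc ⊢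
    rw [min_eq_right (by linarith), min_eq_right (by linarith)]
    rcases le_total (b : ℝ) c with h | h
    · rw [max_eq_left (by linarith), max_eq_right (by linarith)]
      ring
    · rw [max_eq_right (by linarith), max_eq_left (by linarith)]
      ring
  have := hsub a
  rw [h₁, h₂, ← hsub a'] at this
  exact Subtype.ext (by linarith)

section InverseSequence

variable {ι : Type*} [LinearOrder ι] {X : ι → Type*}
  (r : ∀ ⦃α β : ι⦄, α ≤ β → X β → X α) (s : ∀ ⦃α δ : ι⦄, α ⋖ δ → X α → X δ)

def deviations {γ : ι} (z : X γ) : Set ι :=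
  {α | ∃ δ, ∃ (h : α ⋖ δ) (hδ : δ ≤ γ), r hδ z ≠ s h (r (h.le.trans hδ) z)}

/-- Points over `y` that follow the sections from `β` on. For `γ < β` the first condition is
vacuous, which lets the extensions form a compatible family over all of `ι`. -/
def extensions {β : ι} (y : X β) (γ : ι) : Set (X γ) :=
  {z | (∀ h : β ≤ γ, r h z = y) ∧ deviations r s z ⊆ Iio β}

variable {r s}

theorem deviations_subset_Iio {γ : ι} (z : X γ) : deviations r s z ⊆ Iio γ :=
  fun _ ⟨_, h, hδ, _⟩ => h.lt.trans_le hδ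

variable [∀ α, TopologicalSpace (X α)]

variable (r s) in
def threadDeviations (x : InvLim r) : Set ι :=
  {α | ∃ δ, ∃ h : α ⋖ δ, x.1 δ ≠ s h (x.1 α)}

namespace IsContInvSeq

variable (hseq : IsContInvSeq r)
include hseq

theorem isClosed_setOf_thread [∀ α, T2Space (X α)] :
    IsClosed {x : ∀ α, X α | ∀ ⦃α β : ι⦄ (h : α ≤ β), r h (x β) = x α} := by
  simp only [ofPred_forall]
  exact isClosed_iInter fun α => isClosed_iInter fun β => isClosed_iInter fun h =>
    isClosed_eq ((hseq.continuous h).comp (continuous_apply β)) (continuous_apply α)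

theorem compactSpace_invLim [∀ α, CompactSpace (X α)] [∀ α, T2Space (X α)] :
    CompactSpace (InvLim r) :=
  isCompact_iff_compactSpace.1 hseq.isClosed_setOf_thread.isCompact

theorem eq_of_isSuccLimit {γ : ι} (hγ : Order.IsSuccLimit γ) {z w : X γ}
    (h : ∀ α (hα : α < γ), r hα.le z = r hα.le w) : z = w :=
  hseq.limit_inj γ (not_isMin_iff.1 hγ.not_isMin)
    (fun _ hα => (hγ.isSuccPrelimit.lt_iff_exists_lt.1 hα).imp fun _ h => h.symm) z w h

theorem exists_thread_forall_mem [Nonempty ι] [∀ α, CompactSpace (X α)] [∀ α, T2Space (X α)]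
    (K : ∀ α, Set (X α)) (hK : ∀ α, IsClosed (K α)) (hKne : ∀ α, (K α).Nonempty)
    (hKr : ∀ ⦃α β⦄ (h : α ≤ β), MapsTo (r h) (K β) (K α)) :
    ∃ x : InvLim r, ∀ α, x.1 α ∈ K α := by
  classical
  let C : ι → Set (∀ α, X α) := fun γ => {f | f γ ∈ K γ ∧ ∀ α (h : α ≤ γ), r h (f γ) = f α}
  have hCanti : Antitone C := by
    rintro γ γ' hγ f ⟨hf, hfr⟩
    refine ⟨hfr γ hγ ▸ hKr hγ hf, fun α h => ?_⟩
    rw [← hfr γ hγ, hseq.map_comp, hfr]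
  have hCne : ∀ γ, (C γ).Nonempty := by
    intro γ
    obtain ⟨w, hw⟩ := hKne γ
    refine ⟨fun α => if h : α ≤ γ then r h w else (hKne α).some, ?_, fun α h => ?_⟩
    · simpa only [dif_pos le_rfl, hseq.map_id] using hw
    · simp only [dif_pos h, dif_pos le_rfl, hseq.map_id]
  have hCcl : ∀ γ, IsClosed (C γ) := by
    intro γ
    simp only [C, ofPred_and, ofPred_forall]
    exact ((hK γ).preimage (continuous_apply γ)).inter <| isClosed_iInter fun α =>
      isClosed_iInter fun h =>
        isClosed_eq ((hseq.continuous h).comp (continuous_apply γ)) (continuous_apply α)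
  obtain ⟨f, hf⟩ := IsCompact.nonempty_iInter_of_directed_nonempty_isCompact_isClosed C
    hCanti.directed_ge hCne (fun γ => (hCcl γ).isCompact) hCcl
  have hfC := mem_iInter.1 hf
  exact ⟨⟨f, fun α β h => (hfC β).2 α h⟩, fun α => (hfC α).1⟩

end IsContInvSeq

theorem threadDeviations_inter_Iio (x : InvLim r) (γ : ι) :
    threadDeviations r s x ∩ Iio γ = deviations r s (x.1 γ) := by
  ext α
  constructor
  · rintro ⟨⟨δ, h, hne⟩, hα⟩
    exact ⟨δ, h, h.ge_of_gt hα, by rwa [x.2, x.2]⟩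
  · rintro ⟨δ, h, hδ, hne⟩
    exact ⟨⟨δ, h, by rwa [x.2, x.2] at hne⟩, h.lt.trans_le hδ⟩

theorem threadDeviations_eq_iUnion (x : InvLim r) :
    threadDeviations r s x = ⋃ γ, deviations r s (x.1 γ) := by
  refine Subset.antisymm (fun α hα => ?_)
    (iUnion_subset fun γ => (threadDeviations_inter_Iio x γ).symm.subset.trans inter_subset_left)
  have ⟨δ, h, _⟩ := hα
  exact mem_iUnion.2 ⟨δ, threadDeviations_inter_Iio x δ ▸ ⟨hα, h.lt⟩⟩

namespace IsContInvSeq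

variable (hseq : IsContInvSeq r)
include hseq

theorem deviations_map {γ' γ : ι} (h : γ' ≤ γ) (z : X γ) :
    deviations r s (r h z) = deviations r s z ∩ Iio γ' := by
  ext α
  constructor
  · rintro ⟨δ, hc, hδ, hne⟩
    refine ⟨⟨δ, hc, hδ.trans h, ?_⟩, hc.lt.trans_le hδ⟩
    rwa [hseq.map_comp, hseq.map_comp] at hne
  · rintro ⟨⟨δ, hc, hδ, hne⟩, hα⟩
    refine ⟨δ, hc, hc.ge_of_gt hα, ?_⟩
    rwa [hseq.map_comp, hseq.map_comp]

theorem deviations_section (hsr : ∀ ⦃α δ⦄ (h : α ⋖ δ) x, r h.le (s h x) = x) {m γ : ι}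
    (h : m ⋖ γ) (z : X m) : deviations r s (s h z) = deviations r s z := by
  have hsub : deviations r s (s h z) ⊆ Iio m := by
    rintro α ⟨δ, hα, hδ, hne⟩
    refine (h.le_of_lt (hα.lt.trans_le hδ)).lt_of_ne ?_
    rintro rfl
    obtain rfl := hα.unique_right h
    rw [hseq.map_id, hsr] at hne
    exact hne rfl
  rw [← inter_eq_left.2 hsub, ← hseq.deviations_map h.le, hsr]

theorem mapsTo_extensions {β γ₁ γ₂ : ι} (y : X β) (h : γ₁ ≤ γ₂) :
    MapsTo (r h) (extensions r s y γ₂) (extensions r s y γ₁) := by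
  rintro z ⟨hzy, hzdev⟩
  refine ⟨fun hβ => ?_, ?_⟩
  · rw [hseq.map_comp]
    exact hzy _
  · rw [hseq.deviations_map]
    exact inter_subset_left.trans hzdev

theorem deviations_eq_of_mem_extensions {β γ : ι} {y : X β} {z : X γ}
    (hz : z ∈ extensions r s y γ) (hβγ : β ≤ γ) : deviations r s z = deviations r s y := by
  rw [← hz.1 hβγ, hseq.deviations_map, inter_eq_left.2 hz.2]

variable [∀ α, T2Space (X α)] (hs : ∀ ⦃α δ⦄ (h : α ⋖ δ), Continuous (s h))
include hs

theorem isClosed_setOf_deviations_subset (γ : ι) (S : Set ι) :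
    IsClosed {z : X γ | deviations r s z ⊆ S} := by
  have hdev : {z : X γ | deviations r s z ⊆ S} = ⋂ (α ∉ S) (δ) (h : α ⋖ δ) (hδ : δ ≤ γ),
      {z | r hδ z = s h (r (h.le.trans hδ) z)} := by
    ext z
    simp only [deviations, subset_def, mem_ofPred_eq, mem_iInter]
    grind
  rw [hdev]
  exact isClosed_biInter fun α _ => isClosed_iInter fun δ => isClosed_iInter fun h =>
    isClosed_iInter fun hδ => isClosed_eq (hseq.continuous hδ) ((hs h).comp (hseq.continuous _))

theorem isClosed_extensions {β : ι} (y : X β) (γ : ι) : IsClosed (extensions r s y γ) := by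
  simp only [extensions, ofPred_and, ofPred_forall]
  exact (isClosed_iInter fun h => isClosed_eq (hseq.continuous h) continuous_const).inter
    (hseq.isClosed_setOf_deviations_subset hs γ _)

theorem extensions_nonempty_of_isSuccPrelimit [∀ α, CompactSpace (X α)] {β γ : ι} (y : X β)
    (hβγ : β < γ) (hγ : Order.IsSuccPrelimit γ)
    (ih : ∀ γ' < γ, (extensions r s y γ').Nonempty) : (extensions r s y γ).Nonempty := by
  let t : Ico β γ → Set (X γ) := fun i => r i.2.2.le ⁻¹' extensions r s y i
  have ht : Antitone t := fun i j hij z hz => by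
    simpa only [t, mem_preimage, hseq.map_comp] using hseq.mapsTo_extensions y hij hz
  have htne : ∀ i, (t i).Nonempty := fun i => by
    obtain ⟨w, hw⟩ := ih i i.2.2
    obtain ⟨z, rfl⟩ := hseq.surjective i.2.2.le w
    exact ⟨z, hw⟩
  have htcl : ∀ i, IsClosed (t i) := fun i =>
    (hseq.isClosed_extensions hs y i).preimage (hseq.continuous _)
  have : Nonempty (Ico β γ) := ⟨⟨β, le_rfl, hβγ⟩⟩
  obtain ⟨z, hz⟩ := IsCompact.nonempty_iInter_of_directed_nonempty_isCompact_isClosed t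
    ht.directed_ge htne (fun i => (htcl i).isCompact) htcl
  have hzt : ∀ i : Ico β γ, r i.2.2.le z ∈ extensions r s y i := mem_iInter.1 hz
  refine ⟨z, fun h => ?_, fun α hα => not_le.1 fun hβα => ?_⟩
  · simpa only [hseq.map_comp] using (hzt ⟨β, le_rfl, hβγ⟩).1 le_rfl
  · obtain ⟨c, hcγ, hαc⟩ := hγ.lt_iff_exists_lt.1 (deviations_subset_Iio z hα)
    have hc := (hzt ⟨c, hβα.trans hαc.le, hcγ⟩).2
    rw [hseq.deviations_map] at hc
    exact (hc ⟨hα, hαc⟩).not_ge hβα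

theorem extensions_nonempty [WellFoundedLT ι] [∀ α, CompactSpace (X α)]
    (hsr : ∀ ⦃α δ⦄ (h : α ⋖ δ) x, r h.le (s h x) = x) {β : ι} (y : X β) (γ : ι) :
    (extensions r s y γ).Nonempty := by
  induction γ using WellFoundedLT.induction with
  | _ γ ih =>
  rcases le_or_gt γ β with hγβ | hβγ
  · refine ⟨r hγβ y, fun h => ?_, (deviations_subset_Iio _).trans (Iio_subset_Iio hγβ)⟩
    rw [hseq.map_comp, hseq.map_id]
  by_cases hγ : Order.IsSuccPrelimit γ
  · exact hseq.extensions_nonempty_of_isSuccPrelimit hs y hβγ hγ ih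
  obtain ⟨m, hm⟩ := Order.not_isSuccPrelimit_iff.1 hγ
  have hβm : β ≤ m := hm.le_of_lt hβγ
  obtain ⟨z, hz⟩ := ih m hm.lt
  refine ⟨s hm z, fun h => ?_, ?_⟩
  · rw [← hseq.map_comp hβm hm.le, hsr, hz.1 hβm]
  · rw [hseq.deviations_section hsr]
    exact hz.2

end IsContInvSeq

end InverseSequence

section Density

variable {ι : Type*} [LinearOrder ι] [OrderBot ι] {X : ι → Type*} [∀ α, TopologicalSpace (X α)]
  (r : ∀ ⦃α β : ι⦄, α ≤ β → X β → X α) (s : ∀ ⦃α δ : ι⦄, α ⋖ δ → X α → X δ)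
  (D₀ : Set (X ⊥))

def goodSet (γ : ι) : Set (X γ) :=
  {z | r bot_le z ∈ D₀ ∧ (deviations r s z).Countable}

def goodThreads : Set (InvLim r) :=
  {x | x.1 ⊥ ∈ D₀ ∧ (threadDeviations r s x).Countable}

variable {r s D₀}

namespace IsContInvSeq

variable (hseq : IsContInvSeq r)
include hseq

theorem mem_goodSet_of_mem_extensions {β γ : ι} {y : X β} (hy : y ∈ goodSet r s D₀ β)
    {z : X γ} (hz : z ∈ extensions r s y γ) (hβγ : β ≤ γ) : z ∈ goodSet r s D₀ γ := by
  refine ⟨?_, hseq.deviations_eq_of_mem_extensions hz hβγ ▸ hy.2⟩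
  rw [← hseq.map_comp bot_le hβγ, hz.1 hβγ]
  exact hy.1

variable [∀ α, T2Space (X α)] (hs : ∀ ⦃α δ⦄ (h : α ⋖ δ), Continuous (s h))
include hs

theorem isCountablyClosed_goodSet (hD₀c : IsCountablyClosed D₀) (γ : ι) :
    IsCountablyClosed (goodSet r s D₀ γ) := by
  intro C hC hCc z hz
  have hS : (⋃ c ∈ C, deviations r s c).Countable := hCc.biUnion fun c hc => (hC hc).2
  refine ⟨hD₀c.preimage (hseq.continuous bot_le) C (fun c hc => (hC hc).1) hCc hz, hS.mono ?_⟩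
  exact closure_minimal (fun c hc => subset_biUnion_of_mem hc)
    (hseq.isClosed_setOf_deviations_subset hs γ _) hz

theorem dense_goodSet_of_covBy [∀ α, CompactSpace (X α)] (hD₀c : IsCountablyClosed D₀)
    {m γ : ι} (hm : m ⋖ γ)
    (hGδ : ∀ u : Set (X γ), IsOpen u → u.Nonempty →
      ∃ G : Set (X m), G.Nonempty ∧ IsGδ G ∧ G ⊆ r hm.le '' u)
    (hdense : Dense (goodSet r s D₀ m)) : Dense (goodSet r s D₀ γ) := by
  rw [dense_iff_inter_open]
  intro v hv hvne
  obtain ⟨G, hGne, hG, hGv⟩ := hGδ v hv hvne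
  obtain ⟨_, ⟨hyD₀, hydev⟩, hyG⟩ :=
    hdense.inter_nonempty_of_isGδ (hseq.isCountablyClosed_goodSet hs hD₀c m) hG hGne
  obtain ⟨z, hzv, rfl⟩ := hGv hyG
  refine ⟨z, hzv, by rwa [hseq.map_comp] at hyD₀, (hydev.insert m).mono fun α hα => ?_⟩
  rcases (hm.le_of_lt (deviations_subset_Iio z hα)).eq_or_lt with rfl | hαm
  · exact mem_insert α _
  · exact mem_insert_of_mem _ (hseq.deviations_map hm.le z ▸ ⟨hα, hαm⟩)

theorem dense_goodSet_of_isSuccLimit [WellFoundedLT ι] [∀ α, CompactSpace (X α)]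
    (hsr : ∀ ⦃α δ⦄ (h : α ⋖ δ) x, r h.le (s h x) = x) {γ : ι} (hγ : Order.IsSuccLimit γ)
    (ih : ∀ α < γ, Dense (goodSet r s D₀ α)) : Dense (goodSet r s D₀ γ) := by
  obtain ⟨α₀, hα₀⟩ := not_isMin_iff.1 hγ.not_isMin
  have : Nonempty (Iio γ) := ⟨⟨α₀, hα₀⟩⟩
  have hinj : Function.Injective fun (z : X γ) (α : Iio γ) => r α.2.le z :=
    fun z w hzw => hseq.eq_of_isSuccLimit hγ fun α hα => congrFun hzw ⟨α, hα⟩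
  -- `X γ` is compact and injects into `Π α < γ, X α`, so it carries the induced topology.
  refine dense_of_forall_dense_image (ι := Iio γ) (X := fun α => X α)
    (r := fun α β (h : α ≤ β) => r (α := α) (β := β) h)
    (fun _ _ h => hseq.continuous h) (fun _ _ h z => hseq.map_comp h _ z)
    ((continuous_pi fun α => hseq.continuous _).isClosedEmbedding hinj).isInducing
    fun α => (ih α α.2).mono fun y hy => ?_
  obtain ⟨z, hz⟩ := hseq.extensions_nonempty hs hsr y γ
  exact ⟨z, hseq.mem_goodSet_of_mem_extensions hy hz α.2.le, hz.1 α.2.le⟩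

theorem dense_goodSet [WellFoundedLT ι] [∀ α, CompactSpace (X α)]
    (hsr : ∀ ⦃α δ⦄ (h : α ⋖ δ) x, r h.le (s h x) = x)
    (hGδ : ∀ ⦃α δ⦄ (h : α ⋖ δ) (u : Set (X δ)), IsOpen u → u.Nonempty →
      ∃ G : Set (X α), G.Nonempty ∧ IsGδ G ∧ G ⊆ r h.le '' u)
    (hD₀ : Dense D₀) (hD₀c : IsCountablyClosed D₀) (γ : ι) : Dense (goodSet r s D₀ γ) := by
  induction γ using WellFoundedLT.induction with
  | _ γ ih =>
  rcases eq_bot_or_bot_lt γ with rfl | hγ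
  · refine hD₀.mono fun z hz => ⟨by rwa [hseq.map_id], countable_empty.mono ?_⟩
    simpa only [Iio_bot] using deviations_subset_Iio z
  by_cases hlim : Order.IsSuccPrelimit γ
  · exact hseq.dense_goodSet_of_isSuccLimit hs hsr ⟨not_isMin_iff.2 ⟨⊥, hγ⟩, hlim⟩ ih
  obtain ⟨m, hm⟩ := Order.not_isSuccPrelimit_iff.1 hlim
  exact hseq.dense_goodSet_of_covBy hs hD₀c hm (hGδ hm) (ih m hm.lt)

theorem dense_goodThreads [WellFoundedLT ι] [∀ α, CompactSpace (X α)]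
    (hsr : ∀ ⦃α δ⦄ (h : α ⋖ δ) x, r h.le (s h x) = x)
    (hGδ : ∀ ⦃α δ⦄ (h : α ⋖ δ) (u : Set (X δ)), IsOpen u → u.Nonempty →
      ∃ G : Set (X α), G.Nonempty ∧ IsGδ G ∧ G ⊆ r h.le '' u)
    (hD₀ : Dense D₀) (hD₀c : IsCountablyClosed D₀) : Dense (goodThreads r s D₀) := by
  refine dense_of_forall_dense_image hseq.continuous (p := fun α (x : InvLim r) => x.1 α)
    (fun _ _ h x => x.2 h) IsInducing.subtypeVal
    fun α => (hseq.dense_goodSet hs hsr hGδ hD₀ hD₀c α).mono fun y hy => ?_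
  obtain ⟨x, hx⟩ := hseq.exists_thread_forall_mem (extensions r s y)
    (hseq.isClosed_extensions hs y) (hseq.extensions_nonempty hs hsr y)
    fun _ _ => hseq.mapsTo_extensions y
  have hxα : x.1 α = y := by simpa only [hseq.map_id] using (hx α).1 le_rfl
  have hdev : threadDeviations r s x ⊆ Iio α := by
    rw [threadDeviations_eq_iUnion]
    exact iUnion_subset fun γ => (hx γ).2
  have hgood := hseq.mem_goodSet_of_mem_extensions hy (hx α) le_rfl
  refine ⟨x, ⟨?_, ?_⟩, hxα⟩
  · rw [← x.2 bot_le]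
    exact hgood.1
  · rw [← inter_eq_left.2 hdev, threadDeviations_inter_Iio]
    exact hgood.2

end IsContInvSeq

end Density

section Embedding

variable {ι : Type*} [LinearOrder ι] [OrderBot ι] {X : ι → Type*} [∀ α, TopologicalSpace (X α)]
  (r : ∀ ⦃α β : ι⦄, α ≤ β → X β → X α) (s : ∀ ⦃α δ : ι⦄, α ⋖ δ → X α → X δ) {T₀ : Type*}
  (h₀ : X ⊥ → T₀ → unitInterval)
  (g : ∀ q : {p : ι × ι // p.1 ⋖ p.2}, X q.1.2 → ℕ → unitInterval)

/-- The coordinates `(q, n, b)` of the thread `x` are the positive and negative parts of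
`g q (x δ) n - g q (s (x α)) n` for `q = (α, δ)`; they vanish wherever `x` follows `s`. -/
noncomputable def valdiviaMap (x : InvLim r) :
    T₀ ⊕ ({p : ι × ι // p.1 ⋖ p.2} × ℕ × Bool) → unitInterval
  | .inl t => h₀ (x.1 ⊥) t
  | .inr (q, n, b) =>
    bif b then posDiff (g q (x.1 q.1.2) n) (g q (s q.2 (x.1 q.1.1)) n)
    else posDiff (g q (s q.2 (x.1 q.1.1)) n) (g q (x.1 q.1.2) n)

variable {r s h₀ g}

theorem continuous_valdiviaMap (hs : ∀ ⦃α δ⦄ (h : α ⋖ δ), Continuous (s h))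
    (hh₀ : Continuous h₀) (hg : ∀ q, Continuous (g q)) :
    Continuous (valdiviaMap r s h₀ g) := by
  refine continuous_pi fun i => ?_
  rcases i with t | ⟨q, n, b⟩
  · exact (continuous_apply t).comp (hh₀.comp ((continuous_apply ⊥).comp continuous_subtype_val))
  · have hx : Continuous fun x : InvLim r => g q (x.1 q.1.2) n :=
      (continuous_apply n).comp ((hg q).comp ((continuous_apply _).comp continuous_subtype_val))
    have hsx : Continuous fun x : InvLim r => g q (s q.2 (x.1 q.1.1)) n :=
      (continuous_apply n).comp
        ((hg q).comp ((hs q.2).comp ((continuous_apply _).comp continuous_subtype_val)))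
    cases b
    exacts [hsx.posDiff hx, hx.posDiff hsx]

theorem IsContInvSeq.injective_valdiviaMap [WellFoundedLT ι] (hseq : IsContInvSeq r)
    (hh₀ : Function.Injective h₀)
    (hg : ∀ q : {p : ι × ι // p.1 ⋖ p.2}, Function.Injective fun z => (r q.2.le z, g q z)) :
    Function.Injective (valdiviaMap r s h₀ g) := by
  intro x y hxy
  refine Subtype.ext (funext fun α => ?_)
  induction α using WellFoundedLT.induction with
  | _ α ih =>
  rcases eq_bot_or_bot_lt α with rfl | hα
  · exact hh₀ (funext fun t => congrFun hxy (.inl t))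
  by_cases hlim : Order.IsSuccPrelimit α
  · refine hseq.eq_of_isSuccLimit ⟨not_isMin_iff.2 ⟨⊥, hα⟩, hlim⟩ fun β hβ => ?_
    rw [x.2, y.2]
    exact ih β hβ
  obtain ⟨m, hm⟩ := Order.not_isSuccPrelimit_iff.1 hlim
  have hxm := ih m hm.lt
  let q : {p : ι × ι // p.1 ⋖ p.2} := ⟨(m, α), hm⟩
  have hgq : g q (x.1 α) = g q (y.1 α) := funext fun n => by
    have h₁ := congrFun hxy (.inr (q, n, true))
    have h₂ := congrFun hxy (.inr (q, n, false))
    simp only [valdiviaMap, q, hxm, cond_true, cond_false] at h₁ h₂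
    exact eq_of_posDiff_eq h₁ h₂
  exact hg q (Prod.ext ((x.2 _).trans (hxm.trans (y.2 _).symm)) hgq)

theorem valdiviaMap_mem_sigmaProd {x : InvLim r} (hx₀ : h₀ (x.1 ⊥) ∈ SigmaProd T₀)
    (hx : (threadDeviations r s x).Countable) : valdiviaMap r s h₀ g x ∈ SigmaProd _ := by
  have hpairs : {q : {p : ι × ι // p.1 ⋖ p.2} | q.1.1 ∈ threadDeviations r s x}.Countable :=
    hx.preimage fun q q' hqq' =>
      Subtype.ext (Prod.ext hqq' (q.2.unique_right (hqq' ▸ q'.2 : q.1.1 ⋖ q'.1.2)))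
  refine ((hx₀.image Sum.inl).union ((hpairs.prod countable_univ).image Sum.inr)).mono ?_
  rintro (t | ⟨q, n, b⟩) ht
  · exact Or.inl ⟨t, ht, rfl⟩
  · refine Or.inr ⟨(q, n, b), ⟨by_contra fun hq => ht ?_, mem_univ _⟩, rfl⟩
    have heq : x.1 q.1.2 = s q.2 (x.1 q.1.1) := not_not.1 fun hne => hq ⟨_, q.2, hne⟩
    cases b <;> simp only [valdiviaMap, heq, posDiff_self, cond_true, cond_false]

end Embedding

/-- the limit of a continuous inverse sequence of compact Hausdorff
spaces, indexed by an ordinal (here: a well-ordered set with least element `⊥`),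
whose first space is Valdivia compact and whose successor bonding maps are simple
retractions, is Valdivia compact. -/
theorem statement10 {ι : Type v} [LinearOrder ι] [WellFoundedLT ι] [OrderBot ι]
    {X : ι → Type u} [∀ α, TopologicalSpace (X α)] [∀ α, CompactSpace (X α)]
    [∀ α, T2Space (X α)]
    (r : ∀ ⦃α β : ι⦄, α ≤ β → X β → X α) (hseq : IsContInvSeq r)
    (h0 : IsValdivia (X ⊥))
    (hsucc : ∀ (α β : ι) (h : α < β), (∀ γ, α < γ → β ≤ γ) →
      IsSimpleRetraction (r h.le)) :
    IsValdivia (InvLim r) := by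
  obtain ⟨T₀, h₀, hh₀⟩ := h0
  have hsimple : ∀ ⦃α δ : ι⦄ (h : α ⋖ δ), IsSimpleRetraction (r h.le) :=
    fun α δ h => hsucc α δ h.lt fun _ => h.ge_of_gt
  choose s hs hsr using fun α δ (h : α ⋖ δ) => (hsimple h).1.2.2
  choose g hg hgi using fun q : {p : ι × ι // p.1 ⋖ p.2} => (hsimple q.2).2.2
  have := hseq.compactSpace_invLim
  have hdense := hseq.dense_goodThreads hs (fun α δ h => congrFun (hsr α δ h))
    (fun _ _ h => (hsimple h).2.1) hh₀.dense_preimage_sigmaProd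
    ((isCountablyClosed_sigmaProd T₀).preimage hh₀.1.continuous)
  exact ⟨_, valdiviaMap r s h₀ g, isValdiviaEmbedding_of_dense
    (continuous_valdiviaMap hs hh₀.1.continuous hg) (hseq.injective_valdiviaMap hh₀.1.injective hgi)
    hdense fun _ hx => valdiviaMap_mem_sigmaProd hx.1 hx.2⟩
end
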